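/- arXiv:1812.01657 — 2 statements merged into one kernel-verified Lean document; each statement's English description precedes it below -/
import Mathlib

section
/- Let E be a finite-dimensional real inner product space of dimension n ≥ 1, let B : E → E be a self-adjoint positive semidefinite linear map, let δₙ be the maximum of ⟨B x, x⟩ over unit vectors x ∈ E, and let F : E → E be a self-adjoint linear map. Then (trace(B ∘ F))² ≤ n · δₙ · trace(B ∘ F ∘ F). -/
/-!
Diagonalise `B` in an orthonormal eigenbasis `(bᵢ)` with eigenvalues `λᵢ ≥ 0`. Then
`trace (B ∘ F) = ∑ λᵢ ⟪bᵢ, F bᵢ⟫` and `trace (B ∘ F ∘ F) = ∑ λᵢ ‖F bᵢ‖²`, so the Cauchy–Schwarz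
inequality with weights `λᵢ`, together with `|⟪bᵢ, F bᵢ⟫| ≤ ‖F bᵢ‖`, gives
`(trace (B ∘ F))² ≤ trace B · trace (B ∘ F ∘ F)`. Finally `trace B = ∑ ⟪B eᵢ, eᵢ⟫ ≤ n δₙ` in any
orthonormal basis `(eᵢ)`.
-/

open LinearMap

open scoped InnerProductSpace

namespace LinearMap

variable {E : Type*} [NormedAddCommGroup E] [InnerProductSpace ℝ E] [FiniteDimensional ℝ E]

theorem trace_le_finrank_mul_of_inner_le {T : E →ₗ[ℝ] E} {c : ℝ}
    (hc : ∀ x : E, ‖x‖ = 1 → ⟪T x, x⟫_ℝ ≤ c) :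
    trace ℝ E T ≤ Module.finrank ℝ E * c := by
  let b := stdOrthonormalBasis ℝ E
  calc trace ℝ E T = ∑ i, ⟪T (b i), b i⟫_ℝ := by
        simp only [trace_eq_sum_inner T b, real_inner_comm]
    _ ≤ ∑ _i, c := Finset.sum_le_sum fun i _ => hc (b i) (b.orthonormal.1 i)
    _ = Module.finrank ℝ E * c := by simp

variable {B : E →ₗ[ℝ] E}

section Eigenbasis

variable {n : ℕ} (hn : Module.finrank ℝ E = n)

theorem IsSymmetric.trace_comp_eq_sum_eigenvalues_mul (hB : B.IsSymmetric) (T : E →ₗ[ℝ] E) :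
    trace ℝ E (B ∘ₗ T) = ∑ i, hB.eigenvalues hn i *
      ⟪hB.eigenvectorBasis hn i, T (hB.eigenvectorBasis hn i)⟫_ℝ := by
  refine (trace_eq_sum_inner _ (hB.eigenvectorBasis hn)).trans
    (Finset.sum_congr rfl fun i _ => ?_)
  rw [comp_apply, ← hB, hB.apply_eigenvectorBasis, real_inner_smul_left]
  rfl

theorem IsSymmetric.trace_comp_comp_self_eq_sum (hB : B.IsSymmetric) {F : E →ₗ[ℝ] E}
    (hF : F.IsSymmetric) :
    trace ℝ E (B ∘ₗ F ∘ₗ F) =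
      ∑ i, hB.eigenvalues hn i * ‖F (hB.eigenvectorBasis hn i)‖ ^ 2 := by
  simp only [hB.trace_comp_eq_sum_eigenvalues_mul hn, comp_apply, ← hF _ (F _),
    real_inner_self_eq_norm_sq]

end Eigenbasis

theorem IsPositive.trace_comp_comp_self_nonneg (hB : B.IsPositive) {F : E →ₗ[ℝ] E}
    (hF : F.IsSymmetric) : 0 ≤ trace ℝ E (B ∘ₗ F ∘ₗ F) := by
  rw [hB.isSymmetric.trace_comp_comp_self_eq_sum rfl hF]
  exact Finset.sum_nonneg fun i _ => mul_nonneg (hB.nonneg_eigenvalues rfl i) (sq_nonneg _)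

theorem IsPositive.trace_comp_sq_le (hB : B.IsPositive) {F : E →ₗ[ℝ] E}
    (hF : F.IsSymmetric) :
    trace ℝ E (B ∘ₗ F) ^ 2 ≤ trace ℝ E B * trace ℝ E (B ∘ₗ F ∘ₗ F) := by
  have hn : Module.finrank ℝ E = Module.finrank ℝ E := rfl
  set b := hB.isSymmetric.eigenvectorBasis hn
  set μ := hB.isSymmetric.eigenvalues hn
  rw [hB.isSymmetric.trace_comp_eq_sum_eigenvalues_mul hn,
    hB.isSymmetric.trace_eq_sum_eigenvalues hn, hB.isSymmetric.trace_comp_comp_self_eq_sum hn hF]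
  refine Finset.sum_sq_le_sum_mul_sum_of_sq_le_mul _ (fun i _ => hB.nonneg_eigenvalues hn i)
    (fun i _ => mul_nonneg (hB.nonneg_eigenvalues hn i) (sq_nonneg _)) fun i _ => ?_
  have hcs : ⟪b i, F (b i)⟫_ℝ ^ 2 ≤ ‖F (b i)‖ ^ 2 :=
    sq_le_sq.2 (by simpa [b.orthonormal.1 i] using abs_real_inner_le_norm (b i) (F (b i)))
  calc (μ i * ⟪b i, F (b i)⟫_ℝ) ^ 2 = μ i * (μ i * ⟪b i, F (b i)⟫_ℝ ^ 2) := by ring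
    _ ≤ μ i * (μ i * ‖F (b i)‖ ^ 2) := by
      have := hB.nonneg_eigenvalues hn i
      gcongr μ i * (μ i * ?_)

end LinearMap

theorem trace_cauchy_schwarz_maxEigenvalue_general {E : Type*} [NormedAddCommGroup E]
    [InnerProductSpace ℝ E] [FiniteDimensional ℝ E]
    (B F : E →ₗ[ℝ] E) (hB : B.IsSymmetric) (hBpos : ∀ x : E, 0 ≤ (inner ℝ (B x) x : ℝ))
    (hF : F.IsSymmetric) (δn : ℝ)
    (hδn : IsGreatest {r : ℝ | ∃ x : E, ‖x‖ = 1 ∧ (inner ℝ (B x) x : ℝ) = r} δn) :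
    (LinearMap.trace ℝ E (B ∘ₗ F)) ^ 2 ≤
      (Module.finrank ℝ E : ℝ) * δn * LinearMap.trace ℝ E (B ∘ₗ F ∘ₗ F) := by
  have hB' : B.IsPositive := (isPositive_iff B).2 ⟨hB, hBpos⟩
  have htrace : trace ℝ E B ≤ Module.finrank ℝ E * δn :=
    trace_le_finrank_mul_of_inner_le fun x hx => hδn.2 ⟨x, hx, rfl⟩
  calc trace ℝ E (B ∘ₗ F) ^ 2 ≤ trace ℝ E B * trace ℝ E (B ∘ₗ F ∘ₗ F) := hB'.trace_comp_sq_le hF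
    _ ≤ Module.finrank ℝ E * δn * trace ℝ E (B ∘ₗ F ∘ₗ F) :=
        mul_le_mul_of_nonneg_right htrace (hB'.trace_comp_comp_self_nonneg hF)

/-- Cauchy–Schwarz trace inequality with the largest eigenvalue bound: if `B` is a
self-adjoint positive semidefinite endomorphism of an `n`-dimensional real inner
product space (`n ≥ 1`), `δₙ = max_{‖x‖=1} ⟨B x, x⟩`, and `F` is self-adjoint, then
`(trace (B ∘ F))² ≤ n · δₙ · trace (B ∘ F ∘ F)`. -/
theorem trace_cauchy_schwarz_maxEigenvalue {E : Type*} [NormedAddCommGroup E]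
    [InnerProductSpace ℝ E] [FiniteDimensional ℝ E]
    (hn : 1 ≤ Module.finrank ℝ E)
    (B F : E →ₗ[ℝ] E) (hB : B.IsSymmetric) (hBpos : ∀ x : E, 0 ≤ (inner ℝ (B x) x : ℝ))
    (hF : F.IsSymmetric) (δn : ℝ)
    (hδn : IsGreatest {r : ℝ | ∃ x : E, ‖x‖ = 1 ∧ (inner ℝ (B x) x : ℝ) = r} δn) :
    (LinearMap.trace ℝ E (B ∘ₗ F)) ^ 2 ≤
      (Module.finrank ℝ E : ℝ) * δn * LinearMap.trace ℝ E (B ∘ₗ F ∘ₗ F) :=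
  trace_cauchy_schwarz_maxEigenvalue_general B F hB hBpos hF δn hδn
end

section
/- Let α > 0 and K ≥ 0 be real numbers, and let λ be a real number such that t · (α · (log t)² − K) ≤ λ for every real t with 0 < t < 1. Then 2(α + √(α² + K·α)) · exp(−1 − √(1 + K/α)) ≤ λ. -/
/-! Evaluate the hypothesis at the maximiser `t = exp (-1 - r)`, `r = √(1 + K/α)`, of
`t (α (log t)² - K)`: with `s = log t`, the critical points solve `α s² + 2 α s - K = 0`,
i.e. `s = -1 ± r`, and at `s = -1 - r` one has `α s² - K = 2 α (1 + r)`
since `α r² = α + K`. -/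

open Real

lemma sqrt_sq_add_mul_eq_mul_sqrt {α : ℝ} (hα : 0 ≤ α) (K : ℝ) :
    √(α ^ 2 + K * α) = α * √(1 + K / α) := by
  rcases hα.eq_or_lt with rfl | hα
  · simp
  rw [show α ^ 2 + K * α = α ^ 2 * (1 + K / α) by field_simp, sqrt_mul (sq_nonneg α),
    sqrt_sq hα.le]

lemma mul_neg_one_sub_sqrt_sq_sub_eq {α K : ℝ} (hα : 0 < α) (hK : 0 ≤ 1 + K / α) :
    α * (-1 - √(1 + K / α)) ^ 2 - K = 2 * (α + √(α ^ 2 + K * α)) := by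
  have hr : α * √(1 + K / α) ^ 2 = α + K := by
    rw [sq_sqrt hK]
    field_simp
  rw [sqrt_sq_add_mul_eq_mul_sqrt hα.le]
  linear_combination hr

/-- Concluding step of the Li–Yau argument: if `λ` dominates `t(α(log t)² − K)` for
every `t ∈ (0,1)`, where `α > 0` and `K ≥ 0`, then
`2(α + √(α² + Kα)) · exp(−1 − √(1 + K/α)) ≤ λ`. -/
theorem liYau_eigenvalue_lowerBound (α K lam : ℝ) (hα : 0 < α) (hK : 0 ≤ K)
    (h : ∀ t : ℝ, 0 < t → t < 1 → t * (α * (Real.log t) ^ 2 - K) ≤ lam) :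
    2 * (α + Real.sqrt (α ^ 2 + K * α)) * Real.exp (-1 - Real.sqrt (1 + K / α)) ≤ lam := by
  have hK' : 0 ≤ 1 + K / α := by positivity
  have ht : exp (-1 - √(1 + K / α)) < 1 :=
    exp_lt_one_iff.mpr (by linarith [sqrt_nonneg (1 + K / α)])
  have := h _ (exp_pos _) ht
  rwa [log_exp, mul_neg_one_sub_sqrt_sq_sub_eq hα hK', mul_comm] at this
end
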